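/- Let p be a prime number and m ≥ 2, n ≥ 1 integers. Then |Sp(2n, Z_{p^m})| = p^{2n² + n} · |Sp(2n, Z_{p^{m−1}})|. -/
import Mathlib

open Matrix

section Scalar
variable (p l : ℕ)

/-- The additive map `x ↦ p^(l+1) * x` from `ZMod p` to `ZMod (p^(l+2))`. -/
noncomputable def psi : ZMod p →+ ZMod (p ^ (l + 2)) :=
  ZMod.lift p ⟨(AddMonoidHom.mulLeft ((p : ZMod (p ^ (l + 2))) ^ (l + 1))).comp
      (Int.castAddHom _), by
    simp only [AddMonoidHom.coe_comp, Function.comp_apply, Int.coe_castAddHom,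
      AddMonoidHom.coe_mulLeft, Int.cast_natCast]
    rw [← pow_succ]
    exact_mod_cast (ZMod.natCast_self (p ^ (l + 2)))⟩

lemma psi_intCast (k : ℤ) :
    psi p l ((k : ℤ) : ZMod p) = (p : ZMod (p ^ (l + 2))) ^ (l + 1) * k := by
  simp [psi]

/-- reduction to `ZMod p` -/
noncomputable def redp : ZMod (p ^ (l + 2)) →+* ZMod p :=
  ZMod.castHom (dvd_pow_self p (Nat.succ_ne_zero _)) (ZMod p)

/-- reduction to `ZMod (p^(l+1))` -/
noncomputable def redq : ZMod (p ^ (l + 2)) →+* ZMod (p ^ (l + 1)) :=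
  ZMod.castHom (pow_dvd_pow p (Nat.le_succ _)) (ZMod (p ^ (l + 1)))

lemma mul_qe (c : ZMod (p ^ (l + 2))) :
    (p : ZMod (p ^ (l + 2))) ^ (l + 1) * c = psi p l (redp p l c) := by
  obtain ⟨k, rfl⟩ := ZMod.intCast_surjective c
  rw [show redp p l ((k : ℤ) : ZMod (p ^ (l + 2))) = ((k : ℤ) : ZMod p) from map_intCast _ k,
    psi_intCast]

lemma psi_mul_left (a : ZMod (p ^ (l + 2))) (x : ZMod p) :
    a * psi p l x = psi p l (redp p l a * x) := by
  obtain ⟨k, rfl⟩ := ZMod.intCast_surjective x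
  rw [psi_intCast, mul_left_comm, mul_qe, _root_.map_mul, map_intCast]

lemma psi_mul_right (x : ZMod p) (a : ZMod (p ^ (l + 2))) :
    psi p l x * a = psi p l (x * redp p l a) := by
  rw [mul_comm, psi_mul_left, mul_comm x]

lemma redp_psi (x : ZMod p) : redp p l (psi p l x) = 0 := by
  obtain ⟨k, rfl⟩ := ZMod.intCast_surjective x
  rw [psi_intCast, _root_.map_mul, map_pow, map_natCast, ZMod.natCast_self, zero_pow (Nat.succ_ne_zero _),
    zero_mul]

lemma redq_psi (x : ZMod p) : redq p l (psi p l x) = 0 := by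
  obtain ⟨k, rfl⟩ := ZMod.intCast_surjective x
  rw [psi_intCast, _root_.map_mul, map_pow, map_natCast]
  norm_cast
  rw [ZMod.natCast_self, zero_mul]

lemma psi_mul_psi (x y : ZMod p) : psi p l x * psi p l y = 0 := by
  rw [psi_mul_left, redp_psi, zero_mul, map_zero]

lemma psi_inj (hp : p ≠ 0) : Function.Injective (psi p l) := by
  rw [injective_iff_map_eq_zero]
  intro x hx
  obtain ⟨k, rfl⟩ := ZMod.intCast_surjective x
  rw [psi_intCast] at hx
  have : (((p:ℤ) ^ (l + 1) * k : ℤ) : ZMod (p ^ (l + 2))) = 0 := by push_cast; exact hx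
  rw [ZMod.intCast_zmod_eq_zero_iff_dvd] at this
  rw [ZMod.intCast_zmod_eq_zero_iff_dvd]
  have hpk : ((p : ℤ)) ∣ k := by
    have h2 : ((p:ℤ) ^ (l + 1) * p) ∣ ((p:ℤ) ^ (l + 1) * k) := by
      rw [← pow_succ]; exact_mod_cast this
    exact (mul_dvd_mul_iff_left (pow_ne_zero (l+1) (by exact_mod_cast hp))).mp h2
  exact_mod_cast hpk

lemma psi_surj_ker (hp : p ≠ 0) (c : ZMod (p ^ (l + 2))) (h : redq p l c = 0) :
    ∃ x : ZMod p, psi p l x = c := by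
  haveI : NeZero (p ^ (l + 2)) := ⟨pow_ne_zero _ hp⟩
  haveI : NeZero (p ^ (l + 1)) := ⟨pow_ne_zero _ hp⟩
  have hc : ((c.val : ℕ) : ZMod (p ^ (l + 2))) = c := ZMod.natCast_rightInverse c
  have : ((c.val : ℕ) : ZMod (p ^ (l + 1))) = 0 := by
    rw [← h, ← hc, redq]; simp
  rw [ZMod.natCast_eq_zero_iff] at this
  obtain ⟨a, ha⟩ := this
  refine ⟨redp p l ((a : ℕ) : ZMod (p ^ (l + 2))), ?_⟩
  rw [← mul_qe, ← hc, ha]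
  push_cast
  ring

end Scalar

/-- The standard symplectic form `Λ = [[0, I], [-I, 0]]` over `ZMod d`. -/
def JJ (ι : Type) [Fintype ι] [DecidableEq ι] (d : ℕ) :
    Matrix (ι ⊕ ι) (ι ⊕ ι) (ZMod d) :=
  Matrix.fromBlocks 0 1 (-1) 0

/-- The set of symplectic matrices: `Mᵀ Λ M = Λ`. -/
def SpSet (ι : Type) [Fintype ι] [DecidableEq ι] (d : ℕ) :
    Set (Matrix (ι ⊕ ι) (ι ⊕ ι) (ZMod d)) :=
  {M | Mᵀ * JJ ι d * M = JJ ι d}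

section MatrixLayer
set_option linter.unusedSectionVars false
variable (p l : ℕ) {κ : Type} [Fintype κ] [DecidableEq κ]

/-- entrywise psi -/
noncomputable def MPsi (X : Matrix κ κ (ZMod p)) : Matrix κ κ (ZMod (p ^ (l + 2))) :=
  X.map (psi p l)

lemma MPsi_inj (hp : p ≠ 0) : Function.Injective (MPsi p l (κ := κ)) := by
  intro X Y h
  ext i j
  exact psi_inj p l hp (congrFun (congrFun h i) j)

lemma MPsi_add (X Y : Matrix κ κ (ZMod p)) : MPsi p l (X + Y) = MPsi p l X + MPsi p l Y := by
  ext i j; simp [MPsi]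

lemma MPsi_zero : MPsi p l (0 : Matrix κ κ (ZMod p)) = 0 := by
  ext i j; simp [MPsi]

lemma MPsi_neg (X : Matrix κ κ (ZMod p)) : MPsi p l (-X) = -MPsi p l X := by
  ext i j; simp [MPsi]

lemma MPsi_transpose (X : Matrix κ κ (ZMod p)) : (MPsi p l X)ᵀ = MPsi p l Xᵀ := by
  ext i j; simp [MPsi]

lemma mul_MPsi (A : Matrix κ κ (ZMod (p ^ (l + 2)))) (X : Matrix κ κ (ZMod p)) :
    A * MPsi p l X = MPsi p l (A.map (redp p l) * X) := by
  ext i j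
  simp only [MPsi, Matrix.mul_apply, Matrix.map_apply, psi_mul_left]
  rw [← map_sum]

lemma MPsi_mul (X : Matrix κ κ (ZMod p)) (A : Matrix κ κ (ZMod (p ^ (l + 2)))) :
    MPsi p l X * A = MPsi p l (X * A.map (redp p l)) := by
  ext i j
  simp only [MPsi, Matrix.mul_apply, Matrix.map_apply, psi_mul_right]
  rw [← map_sum]

lemma map_redp_MPsi (X : Matrix κ κ (ZMod p)) : (MPsi p l X).map (redp p l) = 0 := by
  ext i j; simp [MPsi, redp_psi]

lemma MPsi_mul_MPsi (X Y : Matrix κ κ (ZMod p)) : MPsi p l X * MPsi p l Y = 0 := by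
  rw [MPsi_mul, map_redp_MPsi, Matrix.mul_zero, MPsi_zero]

lemma map_redq_MPsi (X : Matrix κ κ (ZMod p)) : (MPsi p l X).map (redq p l) = 0 := by
  ext i j; simp [MPsi, redq_psi]

lemma exists_MPsi (hp : p ≠ 0) (A : Matrix κ κ (ZMod (p ^ (l + 2))))
    (h : A.map (redq p l) = 0) : ∃ E, MPsi p l E = A := by
  have he : ∀ i j, ∃ x : ZMod p, psi p l x = A i j := fun i j =>
    psi_surj_ker p l hp (A i j) (congrFun (congrFun h i) j)
  exact ⟨Matrix.of fun i j => (he i j).choose, by ext i j; exact (he i j).choose_spec⟩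

end MatrixLayer

section JJlemmas
variable (ι : Type) [Fintype ι] [DecidableEq ι] {a b : ℕ}

lemma JJ_map (f : ZMod a →+* ZMod b) : (JJ ι a).map f = JJ ι b := by
  ext i j
  rcases i with i | i <;> rcases j with j | j <;>
    simp [JJ, Matrix.map_apply, Matrix.one_apply, apply_ite f]

lemma JJ_transpose (d : ℕ) : (JJ ι d)ᵀ = -JJ ι d := by
  ext i j
  rcases i with i | i <;> rcases j with j | j <;>
    simp [JJ, Matrix.one_apply, eq_comm]

lemma JJ_mul_JJ (d : ℕ) : JJ ι d * JJ ι d = -1 := by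
  simp only [JJ, Matrix.fromBlocks_multiply]
  ext i j
  rcases i with i | i <;> rcases j with j | j <;>
    simp [Matrix.one_apply]

lemma sp_map {d e : ℕ} (f : ZMod d →+* ZMod e) {M : Matrix (ι ⊕ ι) (ι ⊕ ι) (ZMod d)}
    (h : M ∈ SpSet ι d) : M.map f ∈ SpSet ι e := by
  have := congrArg (fun N => N.map f) h
  simpa [SpSet, Matrix.map_mul, Matrix.transpose_map, JJ_map] using this

/-- diagonal of `MᵀJM` vanishes -/
lemma diag_conj_JJ (d : ℕ) (L : Matrix (ι ⊕ ι) (ι ⊕ ι) (ZMod d)) (i : ι ⊕ ι) :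
    (Lᵀ * JJ ι d * L) i i = 0 := by
  simp only [Matrix.mul_apply, JJ, Matrix.transpose_apply, Fintype.sum_sum_type,
    Matrix.fromBlocks_apply₁₁, Matrix.fromBlocks_apply₁₂, Matrix.fromBlocks_apply₂₁,
    Matrix.fromBlocks_apply₂₂, Matrix.zero_apply, Matrix.one_apply, Matrix.neg_apply,
    zero_mul, mul_zero, Finset.sum_const_zero, zero_add, add_zero, ite_mul, one_mul,
    neg_mul, Finset.sum_ite_eq, Finset.sum_ite_eq', Finset.mem_univ, if_true,
    Finset.sum_neg_distrib]
  simp only [mul_neg, mul_ite, mul_one, mul_zero, Finset.sum_neg_distrib, Finset.sum_ite_eq, Finset.sum_ite_eq', Finset.mem_univ, neg_mul, neg_neg,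
    if_true]
  rw [neg_add_eq_zero]
  exact Finset.sum_congr rfl fun x _ => mul_comm _ _

end JJlemmas

section Fiber
variable (p l : ℕ) (ι : Type) [Fintype ι] [DecidableEq ι]

set_option maxHeartbeats 1000000 in
lemma card_fiber (hp : p ≠ 0) (t : Matrix (ι ⊕ ι) (ι ⊕ ι) (ZMod (p ^ (l + 1))))
    (ht : t ∈ SpSet ι (p ^ (l + 1))) :
    Nat.card {M : Matrix (ι ⊕ ι) (ι ⊕ ι) (ZMod (p ^ (l + 2))) //
        M ∈ SpSet ι (p ^ (l + 2)) ∧ M.map (redq p l) = t} =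
      Nat.card (Sym2 (ι ⊕ ι) → ZMod p) := by
  haveI : NeZero (p ^ (l + 1)) := ⟨pow_ne_zero _ hp⟩
  set J := JJ ι (p ^ (l + 2)) with hJ
  set J₀ := JJ ι p with hJ0
  set L : Matrix (ι ⊕ ι) (ι ⊕ ι) (ZMod (p ^ (l + 2))) :=
    t.map (fun e => ((e.val : ℕ) : ZMod (p ^ (l + 2)))) with hL
  have hLq : L.map (redq p l) = t := by
    ext i j
    simp only [hL, Matrix.map_apply]
    rw [map_natCast]
    exact ZMod.natCast_rightInverse _
  set L₀ : Matrix (ι ⊕ ι) (ι ⊕ ι) (ZMod p) := L.map (redp p l) with hL0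
  have hcomp : L₀ = t.map (ZMod.castHom (dvd_pow_self p (Nat.succ_ne_zero _)) (ZMod p)) := by
    ext i j
    simp only [hL0, hL, Matrix.map_apply]
    rw [map_natCast, ZMod.castHom_apply, ZMod.natCast_val]
  have hL₀sp : L₀ᵀ * J₀ * L₀ = J₀ := by
    rw [hcomp]
    exact sp_map ι _ ht
  set A : Matrix (ι ⊕ ι) (ι ⊕ ι) (ZMod p) := L₀ᵀ * J₀ with hA
  have hAinv : A * (L₀ * (-J₀)) = 1 := by
    rw [hA, ← Matrix.mul_assoc, hL₀sp, Matrix.mul_neg, JJ_mul_JJ, neg_neg]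
  letI : Invertible A := invertibleOfRightInverse _ _ hAinv
  -- the error matrix E
  have hker : (Lᵀ * J * L - J).map (redq p l) = 0 := by
    rw [Matrix.map_sub _ (fun a b => map_sub (redq p l) a b), Matrix.map_mul, Matrix.map_mul,
      Matrix.transpose_map, hLq, hJ, JJ_map, ht, sub_self]
  obtain ⟨E, hE⟩ := exists_MPsi p l hp _ hker
  have hJT : Jᵀ = -J := JJ_transpose ι _
  have hskew : Eᵀ = -E := by
    apply MPsi_inj p l hp
    rw [← MPsi_transpose, MPsi_neg, hE, Matrix.transpose_sub, Matrix.transpose_mul,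
      Matrix.transpose_mul, Matrix.transpose_transpose, hJT]
    rw [Matrix.neg_mul, Matrix.mul_neg, ← Matrix.mul_assoc]
    abel
  have hdiag : ∀ i, E i i = 0 := by
    intro i
    apply psi_inj p l hp
    have h2 : J i i = 0 := by rcases i with i | i <;> simp [hJ, JJ]
    have h3 : MPsi p l E i i = 0 := by
      rw [hE]
      simp only [Matrix.sub_apply, h2, sub_zero]
      exact diag_conj_JJ ι _ L i
    simpa [MPsi, Matrix.map_apply] using h3
  -- the particular solution Y₀
  set ord : ι ⊕ ι → ℕ := fun x => ((Fintype.equivFin (ι ⊕ ι)) x : ℕ) with hord_def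
  have hord : Function.Injective ord := fun a b h =>
    (Fintype.equivFin _).injective (Fin.ext h)
  set Y₀ : Matrix (ι ⊕ ι) (ι ⊕ ι) (ZMod p) :=
    Matrix.of fun i j => if ord j < ord i then -(E i j) else 0 with hY₀def
  have hY₀ : E + Y₀ - Y₀ᵀ = 0 := by
    ext i j
    have hsk : E i j = -(E j i) := by
      have := congrFun (congrFun hskew j) i
      simpa [Matrix.transpose_apply, Matrix.neg_apply, eq_neg_iff_add_eq_zero,
        neg_eq_iff_add_eq_zero] using this
    simp only [Matrix.add_apply, Matrix.sub_apply, Matrix.transpose_apply, hY₀def,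
      Matrix.of_apply, Matrix.zero_apply]
    rcases lt_trichotomy (ord i) (ord j) with h | h | h
    · rw [if_neg (by omega), if_pos h, hsk]; ring
    · have hij : i = j := hord h
      subst hij
      simp [hdiag]
    · rw [if_pos h, if_neg (by omega)]; ring
  -- the key characterization
  have key : ∀ X : Matrix (ι ⊕ ι) (ι ⊕ ι) (ZMod p),
      (L + MPsi p l X ∈ SpSet ι (p ^ (l + 2)) ↔ E + A * X - (A * X)ᵀ = 0) := by
    intro X
    have hJmap : J.map (redp p l) = J₀ := JJ_map ι (redp p l)
    have e1 : (Lᵀ * J) * MPsi p l X = MPsi p l (A * X) := by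
      rw [mul_MPsi]
      congr 2
      rw [Matrix.map_mul, Matrix.transpose_map, hJmap, ← hL0, ← hA]
    have e2 : (MPsi p l X)ᵀ * (J * L) = MPsi p l (Xᵀ * (J₀ * L₀)) := by
      rw [MPsi_transpose, MPsi_mul]
      congr 2
      rw [Matrix.map_mul, hJmap, ← hL0]
    have e3 : (MPsi p l X)ᵀ * (J * MPsi p l X) = 0 := by
      rw [MPsi_transpose, mul_MPsi, MPsi_mul_MPsi]
    have hLL : Lᵀ * J * L = J + MPsi p l E := by rw [hE]; abel
    have expand : (L + MPsi p l X)ᵀ * J * (L + MPsi p l X)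
        = J + MPsi p l (E + (A * X + Xᵀ * (J₀ * L₀))) := by
      rw [Matrix.transpose_add, Matrix.add_mul, Matrix.add_mul, Matrix.mul_add, Matrix.mul_add]
      rw [MPsi_add, MPsi_add]
      rw [hLL]
      rw [Matrix.mul_assoc (MPsi p l X)ᵀ J L, e2]
      rw [Matrix.mul_assoc (MPsi p l X)ᵀ J (MPsi p l X), e3]
      rw [e1]
      abel
    have hXt : Xᵀ * (J₀ * L₀) = -(A * X)ᵀ := by
      have hAT : Aᵀ = -(J₀ * L₀) := by
        rw [hA, Matrix.transpose_mul, Matrix.transpose_transpose, hJ0, JJ_transpose,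
          Matrix.neg_mul]
      rw [Matrix.transpose_mul, hAT, Matrix.mul_neg, neg_neg]
    constructor
    · intro hsp
      have : J + MPsi p l (E + (A * X + Xᵀ * (J₀ * L₀))) = J := by rw [← expand]; exact hsp
      rw [add_eq_left] at this
      have h0 : E + (A * X + Xᵀ * (J₀ * L₀)) = 0 :=
        MPsi_inj p l hp (by rw [this, MPsi_zero])
      rw [hXt] at h0
      rw [← h0]
      abel
    · intro hcond
      show (L + MPsi p l X)ᵀ * J * (L + MPsi p l X) = J
      rw [expand, hXt]
      have h0 : E + (A * X + -(A * X)ᵀ) = 0 := by rw [← hcond]; abel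
      rw [h0, MPsi_zero, add_zero]
  have hfib : ∀ X : Matrix (ι ⊕ ι) (ι ⊕ ι) (ZMod p),
      (L + MPsi p l X).map (redq p l) = t := by
    intro X
    rw [Matrix.map_add _ (fun a b => map_add (redq p l) a b), hLq, map_redq_MPsi, add_zero]
  -- equivalence chain
  let equiv1 : {X : Matrix (ι ⊕ ι) (ι ⊕ ι) (ZMod p) // E + A * X - (A * X)ᵀ = 0} ≃
      {M : Matrix (ι ⊕ ι) (ι ⊕ ι) (ZMod (p ^ (l + 2))) //
        M ∈ SpSet ι (p ^ (l + 2)) ∧ M.map (redq p l) = t} := by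
    refine Equiv.ofBijective
      (fun X => ⟨L + MPsi p l X.1, (key X.1).mpr X.2, hfib X.1⟩) ⟨?_, ?_⟩
    · intro X Y h
      have h' : L + MPsi p l X.1 = L + MPsi p l Y.1 := congrArg Subtype.val h
      exact Subtype.ext (MPsi_inj p l hp (add_left_cancel h'))
    · rintro ⟨M, hM, hMq⟩
      have h0 : (M - L).map (redq p l) = 0 := by
        rw [Matrix.map_sub _ (fun a b => map_sub (redq p l) a b), hMq, hLq, sub_self]
      obtain ⟨X, hX⟩ := exists_MPsi p l hp _ h0
      have hLM : L + MPsi p l X = M := by rw [hX]; abel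
      exact ⟨⟨X, (key X).mp (hLM ▸ hM)⟩, Subtype.ext hLM⟩
  let equiv2 : {Y : Matrix (ι ⊕ ι) (ι ⊕ ι) (ZMod p) // E + Y - Yᵀ = 0} ≃
      {X : Matrix (ι ⊕ ι) (ι ⊕ ι) (ZMod p) // E + A * X - (A * X)ᵀ = 0} :=
    { toFun := fun Y => ⟨⅟A * Y.1, by
        rw [Matrix.mul_invOf_cancel_left]; exact Y.2⟩
      invFun := fun X => ⟨A * X.1, X.2⟩
      left_inv := fun Y => Subtype.ext (Matrix.mul_invOf_cancel_left _ _)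
      right_inv := fun X => Subtype.ext (Matrix.invOf_mul_cancel_left _ _) }
  let equiv3 : {Z : Matrix (ι ⊕ ι) (ι ⊕ ι) (ZMod p) // Zᵀ = Z} ≃
      {Y : Matrix (ι ⊕ ι) (ι ⊕ ι) (ZMod p) // E + Y - Yᵀ = 0} :=
    { toFun := fun Z => ⟨Y₀ + Z.1, by
        rw [Matrix.transpose_add, Z.2,
          show E + (Y₀ + Z.1) - (Y₀ᵀ + Z.1) = E + Y₀ - Y₀ᵀ from by abel, hY₀]⟩
      invFun := fun Y => ⟨Y.1 - Y₀, by
        have h1 : E + Y.1 = Y.1ᵀ := sub_eq_zero.mp Y.2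
        have h0 : E + Y₀ = Y₀ᵀ := sub_eq_zero.mp hY₀
        rw [Matrix.transpose_sub, ← h1, ← h0]
        abel⟩
      left_inv := fun Z => Subtype.ext (by
        ext i j; simp [Matrix.add_apply, Matrix.sub_apply])
      right_inv := fun Y => Subtype.ext (by
        ext i j; simp [Matrix.add_apply, Matrix.sub_apply]) }
  let equiv4 : {Z : Matrix (ι ⊕ ι) (ι ⊕ ι) (ZMod p) // Zᵀ = Z} ≃
      {f : (ι ⊕ ι) → (ι ⊕ ι) → ZMod p // ∀ a b, f a b = f b a} :=
    { toFun := fun Z => ⟨fun a b => Z.1 a b, fun a b => by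
        have := congrFun (congrFun Z.2 a) b
        simpa [Matrix.transpose_apply] using this.symm⟩
      invFun := fun f => ⟨Matrix.of f.1, by ext a b; exact f.2 b a⟩
      left_inv := fun Z => Subtype.ext rfl
      right_inv := fun f => Subtype.ext rfl }
  exact Nat.card_congr
    ((equiv1.symm.trans equiv2.symm).trans ((equiv3.symm.trans equiv4).trans Sym2.lift))
end Fiber

lemma card_eq_of_fibers {α β : Type} [Finite α] [Finite β] (f : α → β) (k : ℕ)
    (h : ∀ b, Nat.card {a // f a = b} = k) : Nat.card α = k * Nat.card β := by
  classical
  haveI := Fintype.ofFinite α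
  haveI := Fintype.ofFinite β
  rw [Nat.card_eq_fintype_card, Nat.card_eq_fintype_card,
    ← Fintype.card_congr (Equiv.sigmaFiberEquiv f), Fintype.card_sigma]
  have hb : ∀ b, Fintype.card {a // f a = b} = k := fun b => by
    rw [← Nat.card_eq_fintype_card, h b]
  simp [hb, Finset.sum_const, Finset.card_univ, mul_comm]

set_option maxHeartbeats 2000000 in
theorem stmt_7 (p m n : ℕ) (hp : p.Prime) (hm : 2 ≤ m) (hn : 1 ≤ n) :
    Nat.card ↥(SpSet (Fin n) (p ^ m)) =
      p ^ (2 * n ^ 2 + n) * Nat.card ↥(SpSet (Fin n) (p ^ (m - 1))) := by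
  obtain ⟨l, rfl⟩ : ∃ l, m = l + 2 := ⟨m - 2, by omega⟩
  have hm1 : l + 2 - 1 = l + 1 := rfl
  rw [hm1]
  haveI : NeZero (p ^ (l + 2)) := ⟨pow_ne_zero _ hp.ne_zero⟩
  haveI : NeZero (p ^ (l + 1)) := ⟨pow_ne_zero _ hp.ne_zero⟩
  set f : ↥(SpSet (Fin n) (p ^ (l + 2))) → ↥(SpSet (Fin n) (p ^ (l + 1))) :=
    fun M => ⟨(M : Matrix _ _ _).map (redq p l), sp_map _ _ M.2⟩ with hf
  have hfib : ∀ t : ↥(SpSet (Fin n) (p ^ (l + 1))),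
      Nat.card {s // f s = t} = p ^ (2 * n ^ 2 + n) := by
    intro t
    have e : {s // f s = t} ≃
        {M : Matrix (Fin n ⊕ Fin n) (Fin n ⊕ Fin n) (ZMod (p ^ (l + 2))) //
          M ∈ SpSet (Fin n) (p ^ (l + 2)) ∧ M.map (redq p l) = (t : Matrix _ _ _)} :=
      { toFun := fun s => ⟨s.1.1, s.1.2, congrArg Subtype.val s.2⟩
        invFun := fun M => ⟨⟨M.1, M.2.1⟩, Subtype.ext M.2.2⟩
        left_inv := fun s => rfl
        right_inv := fun M => rfl }
    rw [Nat.card_congr e, card_fiber p l (Fin n) hp.ne_zero _ t.2]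
    rw [Nat.card_fun, Nat.card_eq_fintype_card (α := Sym2 (Fin n ⊕ Fin n)), Sym2.card,
      Nat.card_zmod]
    congr 1
    simp only [Fintype.card_sum, Fintype.card_fin]
    rw [Nat.choose_two_right]
    have h1 : n + n + 1 - 1 = n + n := rfl
    rw [h1, show (n + n + 1) * (n + n) = (2 * n ^ 2 + n) * 2 from by ring]
    exact Nat.mul_div_cancel _ (by norm_num)
  exact card_eq_of_fibers f _ hfib
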